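/- (GC functional for BBK) With the BBK scheme as above and Gaussian transition density Π(q_i,p_i,q_{i+1},p_{i+1}) = P(q_{i+1}|q_i,p_i)·P(p_{i+1}|q_{i+1},q_i,p_i) where both factors are explicit Gaussians, the log-ratio with momentum flip satisfies log(Π(q_i,p_i,q_{i+1},p_{i+1}) / Π(q_{i+1},−p_{i+1},q_i,−p_i)) = (2γ/(σ²Δt))[Δp_i^TΔq_i − (Δt²/(2m))(∇V(q_{i+1})^Tp_{i+1} + ∇V(q_i)^Tp_i)] + boundary terms that telescope in i. -/
import Mathlib


open Matrix

set_option maxHeartbeats 2000000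

/-- Gallavotti–Cohen functional for the BBK integrator: the log-ratio of the forward
transition density and the momentum-flipped backward one equals
`(2γ/(σ²Δt))·[Δpᵀ Δq − (Δt²/(2m))(∇V(q')ᵀp' + ∇V(q)ᵀp)]` plus telescoping boundary terms. -/
theorem stmt_17 (n : ℕ) (m γ σ Δt : ℝ)
    (hm : 0 < m) (hγ : 0 < γ) (hσ : 0 < σ) (hΔt : 0 < Δt)
    (gradV : (Fin n → ℝ) → (Fin n → ℝ))
    (Z₀ Z₁ : ℝ) (hZ₀ : 0 < Z₀) (hZ₁ : 0 < Z₁)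
    (P1 : (Fin n → ℝ) → (Fin n → ℝ) → (Fin n → ℝ) → ℝ)
    (hP1 : ∀ q p q', P1 q p q' = Z₀⁻¹ * Real.exp (-(m ^ 2 / (σ ^ 2 * Δt ^ 3)) *
      ((q' - q + (Δt ^ 2 / (2 * m)) • gradV q - ((Δt / m) * (1 - γ * Δt / (2 * m))) • p) ⬝ᵥ
       (q' - q + (Δt ^ 2 / (2 * m)) • gradV q - ((Δt / m) * (1 - γ * Δt / (2 * m))) • p))))
    (P2 : (Fin n → ℝ) → (Fin n → ℝ) → (Fin n → ℝ) → ℝ)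
    (hP2 : ∀ q q' p', P2 q q' p' = Z₁⁻¹ * Real.exp (-(1 / (σ ^ 2 * Δt)) *
      (((1 + γ * Δt / (2 * m)) • p' - (m / Δt) • (q' - q) + (Δt / 2) • gradV q') ⬝ᵥ
       ((1 + γ * Δt / (2 * m)) • p' - (m / Δt) • (q' - q) + (Δt / 2) • gradV q')))) :
    ∃ G : (Fin n → ℝ) → (Fin n → ℝ) → ℝ,
      ∀ qi pi qn pn : Fin n → ℝ,
        Real.log ((P1 qi pi qn * P2 qi qn pn) / (P1 qn (-pn) qi * P2 qn qi (-pi)))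
          = (2 * γ / (σ ^ 2 * Δt)) *
              ((pn - pi) ⬝ᵥ (qn - qi)
                - (Δt ^ 2 / (2 * m)) * (gradV qn ⬝ᵥ pn + gradV qi ⬝ᵥ pi))
            + (G qi pi - G qn pn) := by
  have hm0 : m ≠ 0 := hm.ne'
  have hσ0 : σ ≠ 0 := hσ.ne'
  have hΔt0 : Δt ≠ 0 := hΔt.ne'
  refine ⟨fun _ p => (2 * γ / (m * σ ^ 2)) * (p ⬝ᵥ p), fun qi pi qn pn => ?_⟩
  rw [hP1, hP1, hP2, hP2]
  have hfrac : ∀ s1 s2 s3 s4 : ℝ,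
      (Z₀⁻¹ * Real.exp s1 * (Z₁⁻¹ * Real.exp s2)) /
        (Z₀⁻¹ * Real.exp s3 * (Z₁⁻¹ * Real.exp s4))
      = Real.exp (s1 + s2 - (s3 + s4)) := by
    intro s1 s2 s3 s4
    rw [Real.exp_sub, Real.exp_add, Real.exp_add]
    have h0 : Z₀ ≠ 0 := hZ₀.ne'
    have h1 : Z₁ ≠ 0 := hZ₁.ne'
    field_simp [Real.exp_ne_zero]
  rw [hfrac, Real.log_exp]
  simp only [dotProduct, Pi.add_apply, Pi.sub_apply, Pi.smul_apply, Pi.neg_apply,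
    smul_eq_mul]
  simp only [mul_sub, mul_add, Finset.mul_sum, ← Finset.sum_add_distrib,
    ← Finset.sum_sub_distrib]
  refine Finset.sum_congr rfl fun i _ => ?_
  field_simp
  ring
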